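/- arXiv:1804.03524 — 5 statements merged into one kernel-verified Lean document; each statement's English description precedes it below -/
import Mathlib

section
/- For normal subgroup H of G_x with coset enumeration ⟨H_γ⟩ and associated cosets K_γ = φ(H_γ) in G_y, the converse (inverse relation) of R_α = ⋃_γ H_γ × (K_γ ∘ K_α) equals R'_β = ⋃_γ K_γ × (H_γ ∘ H_β) (the analogous relation built from φ⁻¹) if and only if H_β = (H_α)⁻¹ (the coset of inverses), provided φ⁻¹ is used as the isomorphism from G_y/K to G_x/H. -/
open scoped Pointwise

def cosetSet {G : Type*} [Group G] (H : Subgroup G) (q : G ⧸ H) : Set G :=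
  {g | (QuotientGroup.mk g : G ⧸ H) = q}

/-- `R_α = ⋃_γ H_γ × (K_γ ∘ K_α)` with `K_γ = φ(H_γ)`. -/
def cosetRel {Gx Gy : Type*} [Group Gx] [Group Gy] (H : Subgroup Gx) [H.Normal]
    (K : Subgroup Gy) [K.Normal] (φ : (Gx ⧸ H) ≃* (Gy ⧸ K)) (α : Gx ⧸ H) :
    Set (Gx × Gy) :=
  ⋃ γ : Gx ⧸ H, cosetSet H γ ×ˢ (cosetSet K (φ γ) * cosetSet K (φ α))

/-- `R'_β = ⋃_γ K_γ × (H_γ ∘ H_β)`, the analogous relation built using `φ⁻¹` as the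
isomorphism from `G_y/K` to `G_x/H`. -/
def cosetRel' {Gx Gy : Type*} [Group Gx] [Group Gy] (H : Subgroup Gx) [H.Normal]
    (K : Subgroup Gy) [K.Normal] (φ : (Gx ⧸ H) ≃* (Gy ⧸ K)) (β : Gx ⧸ H) :
    Set (Gy × Gx) :=
  ⋃ γ : Gx ⧸ H, cosetSet K (φ γ) ×ˢ (cosetSet H γ * cosetSet H β)

/-!
Both relations are unions of products of cosets, hence determined by cosets of their points:
`(x, y) ∈ R_α` iff `yK = φ(xH · H_α)`, and `(y, x) ∈ R'_β` iff `xH = φ⁻¹(yK) · H_β`.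
Solving the first equation for `xH` shows that the converse of `R_α` is `R'_{α⁻¹}`, and
`β ↦ R'_β` is injective (look at the points `(1, x)`).
-/

section Cosets

variable {G : Type*} [Group G] (H : Subgroup G)

theorem mem_cosetSet {q : G ⧸ H} {g : G} : g ∈ cosetSet H q ↔ (g : G ⧸ H) = q := Iff.rfl

theorem cosetSet_injective : Function.Injective (cosetSet H) := by
  intro a b hab
  obtain ⟨g, rfl⟩ := QuotientGroup.mk_surjective a
  exact (mem_cosetSet H).1 (hab ▸ rfl : g ∈ cosetSet H b)

variable [H.Normal]

theorem cosetSet_inv (a : G ⧸ H) : (cosetSet H a)⁻¹ = cosetSet H a⁻¹ := by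
  ext g
  rw [Set.mem_inv, mem_cosetSet, mem_cosetSet, QuotientGroup.mk_inv, inv_eq_iff_eq_inv]

theorem mem_cosetSet_mul {a b : G ⧸ H} {g : G} :
    g ∈ cosetSet H a * cosetSet H b ↔ (g : G ⧸ H) = a * b := by
  constructor
  · rintro ⟨s, rfl, t, rfl, rfl⟩
    rfl
  · intro hg
    obtain ⟨s, rfl⟩ := QuotientGroup.mk_surjective a
    refine ⟨s, rfl, s⁻¹ * g, ?_, mul_inv_cancel_left s g⟩
    rw [mem_cosetSet, QuotientGroup.mk_mul, QuotientGroup.mk_inv, hg, inv_mul_cancel_left]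

end Cosets

section Relations

variable {Gx Gy : Type*} [Group Gx] [Group Gy] (H : Subgroup Gx) [H.Normal]
  (K : Subgroup Gy) [K.Normal] (φ : (Gx ⧸ H) ≃* (Gy ⧸ K))

theorem mem_cosetRel {α : Gx ⧸ H} {x : Gx} {y : Gy} :
    (x, y) ∈ cosetRel H K φ α ↔ (y : Gy ⧸ K) = φ (x * α) := by
  simp only [cosetRel, Set.mem_iUnion, Set.mem_prod, mem_cosetSet, mem_cosetSet_mul, map_mul]
  exact ⟨fun ⟨_, rfl, h⟩ ↦ h, fun h ↦ ⟨_, rfl, h⟩⟩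

theorem mem_cosetRel' {β : Gx ⧸ H} {x : Gx} {y : Gy} :
    (y, x) ∈ cosetRel' H K φ β ↔ (x : Gx ⧸ H) = φ.symm y * β := by
  simp only [cosetRel', Set.mem_iUnion, Set.mem_prod, mem_cosetSet, mem_cosetSet_mul]
  exact ⟨fun ⟨_, h, h'⟩ ↦ by rwa [h, φ.symm_apply_apply],
    fun h ↦ ⟨_, (φ.apply_symm_apply _).symm, h⟩⟩

theorem preimage_swap_cosetRel (α : Gx ⧸ H) :
    Prod.swap ⁻¹' cosetRel H K φ α = cosetRel' H K φ α⁻¹ := by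
  ext ⟨y, x⟩
  rw [Set.mem_preimage, Prod.swap_prod_mk, mem_cosetRel, mem_cosetRel', ← φ.symm_apply_eq,
    eq_mul_inv_iff_mul_eq, eq_comm]

theorem cosetRel'_injective : Function.Injective (cosetRel' H K φ) := by
  intro β β' h
  obtain ⟨x, hx⟩ := QuotientGroup.mk_surjective β
  have hmem : ((1 : Gy), x) ∈ cosetRel' H K φ β := by
    rw [mem_cosetRel', QuotientGroup.mk_one, map_one, one_mul, hx]
  rwa [h, mem_cosetRel', QuotientGroup.mk_one, map_one, one_mul, hx] at hmem

end Relations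

/-- Converse Theorem: the converse (inverse relation) of `R_α` equals `R'_β` if and only
if the coset `H_β` is the coset of inverses `(H_α)⁻¹`. -/
theorem converse_cosetRel_eq_iff {Gx Gy : Type*} [Group Gx] [Group Gy]
    (H : Subgroup Gx) [H.Normal] (K : Subgroup Gy) [K.Normal]
    (φ : (Gx ⧸ H) ≃* (Gy ⧸ K)) (α β : Gx ⧸ H) :
    Prod.swap ⁻¹' (cosetRel H K φ α) = cosetRel' H K φ β ↔
      cosetSet H β = (cosetSet H α)⁻¹ := by
  rw [preimage_swap_cosetRel, cosetSet_inv, (cosetRel'_injective H K φ).eq_iff,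
    (cosetSet_injective H).eq_iff, eq_comm]
end

section
/- Suppose θ embeds the Lyndon algebra B of a finite line ℓ (|ℓ| ≥ 2) into a full coset relation algebra on a simple group triple, and H_{xy} ≠ {e_x}. Then there is a unique point p ∈ ℓ with (G_x × G_y) ∩ θ(p) ≠ ∅, and for this p: G_x × G_y ⊆ θ(p), G_y × G_x ⊆ θ(p), and (G_x ∪ G_y) × (G_x ∪ G_y) ⊆ θ(p ∪ {1'}). -/
open scoped Pointwise

/-- Composition of atoms in the Lyndon algebra of a line `ℓ` (`none` is `1'`). -/
def lynAtom {ℓ : Type*} [DecidableEq ℓ] : Option ℓ → Option ℓ → Set (Option ℓ)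
  | some p, some q =>
      if p = q then {some p, none}
      else {x | ∃ r : ℓ, x = some r ∧ r ≠ p ∧ r ≠ q}
  | some p, none => {some p}
  | none, q => {q}

/-- Relative multiplication in the Lyndon algebra. -/
def lynComp {ℓ : Type*} [DecidableEq ℓ] (A B : Set (Option ℓ)) : Set (Option ℓ) :=
  ⋃ a ∈ A, ⋃ b ∈ B, lynAtom a b

/-- The pairwise disjoint groups `G x`, realized as subsets of the disjoint union. -/
def Gset {I : Type*} (G : I → Type*) (x : I) : Set (Σ x, G x) := {u | u.1 = x}

/-- The atom `R_{xy,α}` of the full coset relation algebra on the simple group triple: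
`(u,v) ∈ R_{xy,α}` iff `u ∈ G_x`, `v ∈ G_y` and the `K_{xy}`-coset of `v` is
`φ_{xy}(uH_{xy}) · φ_{xy}(α)` (here `K_{xy} = H_{yx}`). -/
def Ratom {I : Type*} (G : I → Type*) [∀ x, Group (G x)]
    (H : ∀ x y, Subgroup (G x)) [∀ x y, (H x y).Normal]
    (φ : ∀ x y, (G x ⧸ H x y) ≃* (G y ⧸ H y x))
    (x y : I) (α : G x ⧸ H x y) : Set ((Σ x, G x) × (Σ x, G x)) :=
  {p | ∃ (g : G x) (h : G y), p.1 = ⟨x, g⟩ ∧ p.2 = ⟨y, h⟩ ∧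
    (QuotientGroup.mk h : G y ⧸ H y x) = φ x y (QuotientGroup.mk g) * φ x y α}

/-!
An atom `R` of `G_x × G_y` lies inside a single `θ(p)`: it cannot meet `θ(1')`, the
identity, because `x ≠ y`. Then `R ⊗ R⁻¹ ⊆ θ(p) ⊗ θ(p) = θ(p ; p) = θ{p, 1'}`, and
`R ⊗ R⁻¹` contains the atoms `R_{xx,g}` for `g ∈ H_{xy}`. If two atoms of `G_x × G_y` went
to distinct points `p ≠ q`, these atoms would lie in `θ{p, 1'} ∩ θ{q, 1'} = θ(1')`; but the
only atom of `G_x × G_x` inside the identity is `R_{xx,e}`, and `H_{xy} ≠ {e}`. So all of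
`G_x × G_y` lies in one `θ(p)`, hence so does its converse `G_y × G_x`, and composing these
rectangles puts `G_x × G_x` and `G_y × G_y` inside `θ(p) ⊗ θ(p) = θ{p, 1'}`.
-/

open Set

section BooleanHom

variable {α β : Type*} {θ : Set α → Set β}

theorem map_univ_of_map_union_compl (hun : ∀ A B, θ (A ∪ B) = θ A ∪ θ B)
    (hc : ∀ A, θ Aᶜ = (θ A)ᶜ) : θ univ = univ := by
  rw [← union_compl_self ∅, hun, hc, union_compl_self]

theorem map_empty_of_map_union_compl (hun : ∀ A B, θ (A ∪ B) = θ A ∪ θ B)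
    (hc : ∀ A, θ Aᶜ = (θ A)ᶜ) : θ ∅ = ∅ := by
  rw [← compl_univ, hc, map_univ_of_map_union_compl hun hc, compl_univ]

theorem monotone_of_map_union (hun : ∀ A B, θ (A ∪ B) = θ A ∪ θ B) : Monotone θ := by
  intro A B hAB
  rw [← union_eq_self_of_subset_left hAB, hun]
  exact subset_union_left

theorem map_inter_of_map_union_compl (hun : ∀ A B, θ (A ∪ B) = θ A ∪ θ B)
    (hc : ∀ A, θ Aᶜ = (θ A)ᶜ) (A B : Set α) : θ (A ∩ B) = θ A ∩ θ B := by
  rw [← compl_compl (A ∩ B), compl_inter, hc, hun, hc, hc, compl_union, compl_compl,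
    compl_compl]

theorem map_coe_finset_of_map_union_compl (hun : ∀ A B, θ (A ∪ B) = θ A ∪ θ B)
    (hc : ∀ A, θ Aᶜ = (θ A)ᶜ) (s : Finset α) : θ s = ⋃ a ∈ s, θ {a} := by
  classical
  induction s using Finset.induction_on with
  | empty => simp [map_empty_of_map_union_compl hun hc]
  | insert a s _ ih => rw [Finset.coe_insert, insert_eq, hun, ih, Finset.set_biUnion_insert]

theorem exists_mem_map_singleton [Fintype α] (hun : ∀ A B, θ (A ∪ B) = θ A ∪ θ B)
    (hc : ∀ A, θ Aᶜ = (θ A)ᶜ) (u : β) : ∃ a, u ∈ θ {a} := by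
  have hu : u ∈ θ (Finset.univ : Finset α) := by
    rw [Finset.coe_univ, map_univ_of_map_union_compl hun hc]
    trivial
  rw [map_coe_finset_of_map_union_compl hun hc] at hu
  simpa using hu

end BooleanHom

theorem lynComp_singleton_self {ℓ : Type*} [DecidableEq ℓ] (p : ℓ) :
    lynComp {some p} {some p} = ({some p, none} : Set (Option ℓ)) := by
  simp [lynComp, lynAtom]

theorem insert_none_inter_insert_none {ℓ : Type*} {p q : ℓ} (hpq : p ≠ q) :
    ({some p, none} : Set (Option ℓ)) ∩ {some q, none} = {none} := by
  ext (_ | r) <;> grind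

section CosetAtoms

variable {I : Type*} {G : I → Type*} [∀ x, Group (G x)] {H : ∀ x, I → Subgroup (G x)}
  [∀ x y, (H x y).Normal] {φ : ∀ x y, (G x ⧸ H x y) ≃* (G y ⧸ H y x)}

theorem ratom_nonempty (x y : I) (α : G x ⧸ H x y) : (Ratom G H φ x y α).Nonempty := by
  obtain ⟨h, hh⟩ := QuotientGroup.mk_surjective (φ x y α)
  refine ⟨(⟨x, 1⟩, ⟨y, h⟩), 1, h, rfl, rfl, ?_⟩
  rw [QuotientGroup.mk_one, map_one, one_mul, hh]

theorem ratom_subset_gset_prod (x y : I) (α : G x ⧸ H x y) :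
    Ratom G H φ x y α ⊆ Gset G x ×ˢ Gset G y := by
  rintro u ⟨g, h, h1, h2, -⟩
  exact ⟨congrArg Sigma.fst h1, congrArg Sigma.fst h2⟩

theorem eq_one_of_ratom_subset_diagonal {x : I} {β : G x ⧸ H x x}
    (hβ : Ratom G H φ x x β ⊆ {u | u.1 = u.2}) : β = 1 := by
  obtain ⟨h, hh⟩ := QuotientGroup.mk_surjective (φ x x β)
  have hmem : ((⟨x, 1⟩ : Σ x, G x), (⟨x, h⟩ : Σ x, G x)) ∈ Ratom G H φ x x β :=
    ⟨1, h, rfl, rfl, by rw [QuotientGroup.mk_one, map_one, one_mul, hh]⟩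
  have h1 : h = 1 := by simpa using (hβ hmem).symm
  rw [h1, QuotientGroup.mk_one] at hh
  exact (map_eq_one_iff _ (φ x x).injective).mp hh.symm

end CosetAtoms

theorem gset_prod_subset_comp {I : Type*} {G : I → Type*}
    {otimes : Set ((Σ x, G x) × (Σ x, G x)) → Set ((Σ x, G x) × (Σ x, G x)) →
      Set ((Σ x, G x) × (Σ x, G x))}
    (hmono : ∀ A B A' B', A ⊆ A' → B ⊆ B' → otimes A B ⊆ otimes A' B') {x y z : I}
    (hrect : otimes (Gset G x ×ˢ Gset G y) (Gset G y ×ˢ Gset G z) = Gset G x ×ˢ Gset G z)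
    {S T : Set ((Σ x, G x) × (Σ x, G x))} (hS : Gset G x ×ˢ Gset G y ⊆ S)
    (hT : Gset G y ×ˢ Gset G z ⊆ T) : Gset G x ×ˢ Gset G z ⊆ otimes S T :=
  hrect ▸ hmono _ _ _ _ hS hT

section Embedding

variable {ℓ I : Type*} {G : I → Type*} [∀ x, Group (G x)]
  {H : ∀ x, I → Subgroup (G x)} [∀ x y, (H x y).Normal]
  {φ : ∀ x y, (G x ⧸ H x y) ≃* (G y ⧸ H y x)}
  {otimes : Set ((Σ x, G x) × (Σ x, G x)) → Set ((Σ x, G x) × (Σ x, G x)) →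
    Set ((Σ x, G x) × (Σ x, G x))}
  {θ : Set (Option ℓ) → Set ((Σ x, G x) × (Σ x, G x))}

theorem exists_ratom_subset_singleton [Fintype ℓ] (hθun : ∀ A B, θ (A ∪ B) = θ A ∪ θ B)
    (hθc : ∀ A, θ Aᶜ = (θ A)ᶜ) (hθid : θ {none} = {p | p.1 = p.2}) {x y : I} (hxy : x ≠ y)
    (hatom : ∀ α A, Ratom G H φ x y α ⊆ θ A ∨ Ratom G H φ x y α ∩ θ A = ∅)
    (α : G x ⧸ H x y) : ∃ p, Ratom G H φ x y α ⊆ θ {some p} := by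
  obtain ⟨u, hu⟩ := ratom_nonempty x y α
  obtain ⟨a, ha⟩ := exists_mem_map_singleton hθun hθc u
  have hsub := (hatom α {a}).resolve_right (nonempty_iff_ne_empty.mp ⟨u, hu, ha⟩)
  cases a with
  | none =>
    rw [hθid] at ha
    obtain ⟨hux, huy⟩ := ratom_subset_gset_prod x y α hu
    exact absurd (hux.symm.trans ((congrArg Sigma.fst ha).trans huy)) hxy
  | some p => exact ⟨p, hsub⟩

theorem ratom_self_subset_of_ratom_subset_singleton [DecidableEq ℓ]
    (hmono : ∀ A B A' B', A ⊆ A' → B ⊆ B' → otimes A B ⊆ otimes A' B')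
    (hθconv : ∀ A, Prod.swap ⁻¹' θ A = θ A)
    (hθcomp : ∀ A B, θ (lynComp A B) = otimes (θ A) (θ B)) {x y : I}
    (hRconv : ∀ α : G x ⧸ H x y,
      otimes (Ratom G H φ x y α) (Prod.swap ⁻¹' (Ratom G H φ x y α)) =
        ⋃ g ∈ (H x y : Set (G x)), Ratom G H φ x x (QuotientGroup.mk g))
    {α : G x ⧸ H x y} {p : ℓ} (hα : Ratom G H φ x y α ⊆ θ {some p})
    {g : G x} (hg : g ∈ H x y) :
    Ratom G H φ x x (QuotientGroup.mk g) ⊆ θ {some p, none} := by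
  have hswap : Prod.swap ⁻¹' Ratom G H φ x y α ⊆ θ {some p} :=
    hθconv {some p} ▸ preimage_mono hα
  calc Ratom G H φ x x (QuotientGroup.mk g)
      ⊆ ⋃ g ∈ (H x y : Set (G x)), Ratom G H φ x x (QuotientGroup.mk g) :=
        subset_biUnion_of_mem (u := fun g => Ratom G H φ x x (QuotientGroup.mk g)) hg
    _ = otimes (Ratom G H φ x y α) (Prod.swap ⁻¹' Ratom G H φ x y α) := (hRconv α).symm
    _ ⊆ otimes (θ {some p}) (θ {some p}) := hmono _ _ _ _ hα hswap
    _ = θ {some p, none} := by rw [← hθcomp, lynComp_singleton_self]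

theorem eq_of_ratom_subset_singleton [DecidableEq ℓ]
    (hθun : ∀ A B, θ (A ∪ B) = θ A ∪ θ B) (hθc : ∀ A, θ Aᶜ = (θ A)ᶜ)
    (hθid : θ {none} = {p | p.1 = p.2})
    (hmono : ∀ A B A' B', A ⊆ A' → B ⊆ B' → otimes A B ⊆ otimes A' B')
    (hθconv : ∀ A, Prod.swap ⁻¹' θ A = θ A)
    (hθcomp : ∀ A B, θ (lynComp A B) = otimes (θ A) (θ B)) {x y : I}
    (hHxx : H x x = ⊥) (hHxy : H x y ≠ ⊥)
    (hRconv : ∀ α : G x ⧸ H x y,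
      otimes (Ratom G H φ x y α) (Prod.swap ⁻¹' (Ratom G H φ x y α)) =
        ⋃ g ∈ (H x y : Set (G x)), Ratom G H φ x x (QuotientGroup.mk g))
    {α α' : G x ⧸ H x y} {p q : ℓ} (hα : Ratom G H φ x y α ⊆ θ {some p})
    (hα' : Ratom G H φ x y α' ⊆ θ {some q}) : p = q := by
  by_contra hpq
  refine hHxy ((Subgroup.eq_bot_iff_forall _).mpr fun g hg => ?_)
  have hdiag : Ratom G H φ x x (QuotientGroup.mk g) ⊆ {u | u.1 = u.2} := by
    rw [← hθid, ← insert_none_inter_insert_none hpq, map_inter_of_map_union_compl hθun hθc]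
    exact subset_inter
      (ratom_self_subset_of_ratom_subset_singleton hmono hθconv hθcomp hRconv hα hg)
      (ratom_self_subset_of_ratom_subset_singleton hmono hθconv hθcomp hRconv hα' hg)
  have hg1 := eq_one_of_ratom_subset_diagonal hdiag
  rwa [QuotientGroup.eq_one_iff, hHxx, Subgroup.mem_bot] at hg1

theorem gset_prod_subset_singleton_of_nonempty [Fintype ℓ] [DecidableEq ℓ]
    (hθun : ∀ A B, θ (A ∪ B) = θ A ∪ θ B) (hθc : ∀ A, θ Aᶜ = (θ A)ᶜ)
    (hθid : θ {none} = {p | p.1 = p.2})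
    (hmono : ∀ A B A' B', A ⊆ A' → B ⊆ B' → otimes A B ⊆ otimes A' B')
    (hθconv : ∀ A, Prod.swap ⁻¹' θ A = θ A)
    (hθcomp : ∀ A B, θ (lynComp A B) = otimes (θ A) (θ B)) {x y : I}
    (hHxx : H x x = ⊥) (hHxy : H x y ≠ ⊥)
    (hpart : (⋃ α, Ratom G H φ x y α) = Gset G x ×ˢ Gset G y)
    (hatom : ∀ α A, Ratom G H φ x y α ⊆ θ A ∨ Ratom G H φ x y α ∩ θ A = ∅)
    (hRconv : ∀ α : G x ⧸ H x y,
      otimes (Ratom G H φ x y α) (Prod.swap ⁻¹' (Ratom G H φ x y α)) =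
        ⋃ g ∈ (H x y : Set (G x)), Ratom G H φ x x (QuotientGroup.mk g))
    {p : ℓ} (hp : ((Gset G x ×ˢ Gset G y) ∩ θ {some p}).Nonempty) :
    Gset G x ×ˢ Gset G y ⊆ θ {some p} := by
  have hx_ne_y : x ≠ y := by
    rintro rfl
    exact hHxy hHxx
  obtain ⟨u, hu, hup⟩ := hp
  intro v hv
  rw [← hpart, mem_iUnion] at hu hv
  obtain ⟨α, huα⟩ := hu
  obtain ⟨β, hvβ⟩ := hv
  have hα := (hatom α _).resolve_right (nonempty_iff_ne_empty.mp ⟨u, huα, hup⟩)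
  obtain ⟨q, hβ⟩ := exists_ratom_subset_singleton hθun hθc hθid hx_ne_y hatom β
  rw [eq_of_ratom_subset_singleton hθun hθc hθid hmono hθconv hθcomp hHxx hHxy hRconv hα hβ]
  exact hβ hvβ

end Embedding

theorem fa2_unique_point_general
    {ℓ I : Type} [Fintype ℓ] [DecidableEq ℓ]
    (G : I → Type) [∀ x, Group (G x)]
    (H : ∀ x y, Subgroup (G x)) [∀ x y, (H x y).Normal]
    (φ : ∀ x y, (G x ⧸ H x y) ≃* (G y ⧸ H y x))
    (hHxx : ∀ x, H x x = ⊥)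
    (otimes : Set ((Σ x, G x) × (Σ x, G x)) → Set ((Σ x, G x) × (Σ x, G x)) →
      Set ((Σ x, G x) × (Σ x, G x)))
    (hmono : ∀ A B A' B', A ⊆ A' → B ⊆ B' → otimes A B ⊆ otimes A' B')
    (θ : Set (Option ℓ) → Set ((Σ x, G x) × (Σ x, G x)))
    (hθun : ∀ A B, θ (A ∪ B) = θ A ∪ θ B)
    (hθc : ∀ A, θ Aᶜ = (θ A)ᶜ)
    (hθid : θ {none} = {p | p.1 = p.2})
    (hθconv : ∀ A, Prod.swap ⁻¹' θ A = θ A)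
    (hθcomp : ∀ A B, θ (lynComp A B) = otimes (θ A) (θ B))
    (hrect : ∀ x y z, otimes (Gset G x ×ˢ Gset G y) (Gset G y ×ˢ Gset G z) =
      Gset G x ×ˢ Gset G z)
    (hpart : ∀ x y, (⋃ α, Ratom G H φ x y α) = Gset G x ×ˢ Gset G y)
    (hatom : ∀ x y α A, Ratom G H φ x y α ⊆ θ A ∨ Ratom G H φ x y α ∩ θ A = ∅)
    (hRconv : ∀ x y (α : G x ⧸ H x y),
      otimes (Ratom G H φ x y α) (Prod.swap ⁻¹' (Ratom G H φ x y α)) =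
        ⋃ g ∈ (H x y : Set (G x)), Ratom G H φ x x (QuotientGroup.mk g))
    (x y : I) (hxy : H x y ≠ ⊥) :
    (∃! p : ℓ, ((Gset G x ×ˢ Gset G y) ∩ θ {some p}).Nonempty) ∧
    ∀ p : ℓ, ((Gset G x ×ˢ Gset G y) ∩ θ {some p}).Nonempty →
      Gset G x ×ˢ Gset G y ⊆ θ {some p} ∧
      Gset G y ×ˢ Gset G x ⊆ θ {some p} ∧
      (Gset G x ∪ Gset G y) ×ˢ (Gset G x ∪ Gset G y) ⊆ θ {some p, none} := by
  have hfill : ∀ p, ((Gset G x ×ˢ Gset G y) ∩ θ {some p}).Nonempty →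
      Gset G x ×ˢ Gset G y ⊆ θ {some p} := fun p =>
    gset_prod_subset_singleton_of_nonempty hθun hθc hθid hmono hθconv hθcomp (hHxx x) hxy
      (hpart x y) (hatom x y) (hRconv x y)
  have hx_ne_y : x ≠ y := by
    rintro rfl
    exact hxy (hHxx x)
  obtain ⟨p₀, hp₀⟩ := exists_ratom_subset_singleton hθun hθc hθid hx_ne_y (hatom x y) 1
  obtain ⟨u, hu⟩ := ratom_nonempty (φ := φ) x y 1
  have hR := ratom_subset_gset_prod (φ := φ) x y 1
  refine ⟨⟨p₀, ⟨u, hR hu, hp₀ hu⟩, fun q hq => eq_of_ratom_subset_singleton hθun hθc hθid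
    hmono hθconv hθcomp (hHxx x) hxy (hRconv x y) (hR.trans (hfill q hq)) hp₀⟩, fun p hp => ?_⟩
  have hxy_sub := hfill p hp
  have hyx_sub : Gset G y ×ˢ Gset G x ⊆ θ {some p} := by
    rw [← hθconv, ← preimage_swap_prod]
    exact preimage_mono hxy_sub
  have hsq : θ {some p} ⊆ otimes (θ {some p}) (θ {some p}) := by
    rw [← hθcomp, lynComp_singleton_self]
    exact monotone_of_map_union hθun (singleton_subset_iff.mpr (mem_insert _ _))
  refine ⟨hxy_sub, hyx_sub, ?_⟩
  rw [← lynComp_singleton_self, hθcomp]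
  simp only [union_prod, prod_union, union_subset_iff]
  exact ⟨⟨gset_prod_subset_comp hmono (hrect x y x) hxy_sub hyx_sub, hyx_sub.trans hsq⟩,
    hxy_sub.trans hsq, gset_prod_subset_comp hmono (hrect y x y) hyx_sub hxy_sub⟩

/-- Lemma fa2: if the Lyndon algebra of a finite line with at least two points embeds via
`θ` into a full coset relation algebra on a simple group triple and `H_{xy} ≠ {e_x}`,
then there is a unique point `p ∈ ℓ` with `(G_x × G_y) ∩ θ(p) ≠ ∅`, and for this `p` we
have `G_x × G_y ⊆ θ(p)`, `G_y × G_x ⊆ θ(p)` and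
`(G_x ∪ G_y) × (G_x ∪ G_y) ⊆ θ(p + 1')`. -/
theorem fa2_unique_point
    {ℓ I : Type} [Fintype ℓ] [DecidableEq ℓ] (hl : 2 ≤ Fintype.card ℓ)
    (G : I → Type) [∀ x, Group (G x)]
    (H : ∀ x y, Subgroup (G x)) [∀ x y, (H x y).Normal]
    (φ : ∀ x y, (G x ⧸ H x y) ≃* (G y ⧸ H y x))
    (hφ : ∀ x y, φ y x = (φ x y).symm)
    (hHxx : ∀ x, H x x = ⊥)
    (otimes : Set ((Σ x, G x) × (Σ x, G x)) → Set ((Σ x, G x) × (Σ x, G x)) →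
      Set ((Σ x, G x) × (Σ x, G x)))
    (hmono : ∀ A B A' B', A ⊆ A' → B ⊆ B' → otimes A B ⊆ otimes A' B')
    (θ : Set (Option ℓ) → Set ((Σ x, G x) × (Σ x, G x)))
    (hθinj : Function.Injective θ)
    (hθun : ∀ A B, θ (A ∪ B) = θ A ∪ θ B)
    (hθc : ∀ A, θ Aᶜ = (θ A)ᶜ)
    (hθid : θ {none} = {p | p.1 = p.2})
    (hθconv : ∀ A, Prod.swap ⁻¹' θ A = θ A)
    (hθcomp : ∀ A B, θ (lynComp A B) = otimes (θ A) (θ B))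
    (hrect : ∀ x y z, otimes (Gset G x ×ˢ Gset G y) (Gset G y ×ˢ Gset G z) =
      Gset G x ×ˢ Gset G z)
    (hpart : ∀ x y, (⋃ α, Ratom G H φ x y α) = Gset G x ×ˢ Gset G y)
    (hatom : ∀ x y α A, Ratom G H φ x y α ⊆ θ A ∨ Ratom G H φ x y α ∩ θ A = ∅)
    (hRconv : ∀ x y (α : G x ⧸ H x y),
      otimes (Ratom G H φ x y α) (Prod.swap ⁻¹' (Ratom G H φ x y α)) =
        ⋃ g ∈ (H x y : Set (G x)), Ratom G H φ x x (QuotientGroup.mk g))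
    (x y : I) (hxy : H x y ≠ ⊥) :
    (∃! p : ℓ, ((Gset G x ×ˢ Gset G y) ∩ θ {some p}).Nonempty) ∧
    ∀ p : ℓ, ((Gset G x ×ˢ Gset G y) ∩ θ {some p}).Nonempty →
      Gset G x ×ˢ Gset G y ⊆ θ {some p} ∧
      Gset G y ×ˢ Gset G x ⊆ θ {some p} ∧
      (Gset G x ∪ Gset G y) ×ˢ (Gset G x ∪ Gset G y) ⊆ θ {some p, none} :=
  fa2_unique_point_general G H φ hHxx otimes hmono θ hθun hθc hθid hθconv hθcomp hrect hpart hatom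
    hRconv x y hxy
end

section
/- Under an embedding θ of the Lyndon algebra of a finite line (≥ 2 points) into a full coset relation algebra on a simple group triple, for each point p the relation ∼_p on indices defined by x ∼_p y iff G_x × G_y ⊆ θ({p,1'}) is symmetric, transitive, and reflexive on its domain (i.e., a partial equivalence relation). -/
open scoped Pointwise

theorem lynComp_pair_self {ℓ : Type*} [DecidableEq ℓ] (p : ℓ) :
    lynComp ({some p, none} : Set (Option ℓ)) {some p, none} = {some p, none} := by
  ext x
  simp only [lynComp, lynAtom, Set.mem_iUnion, Set.mem_insert_iff, Set.mem_singleton_iff]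
  constructor
  · rintro ⟨a, (rfl | rfl), b, (rfl | rfl), hx⟩ <;> simp_all
  · rintro (rfl | rfl)
    · exact ⟨some p, Or.inl rfl, some p, Or.inl rfl, by simp⟩
    · exact ⟨none, Or.inr rfl, none, Or.inr rfl, rfl⟩

section Rectangles

variable {α : Type*} {S : Set (α × α)} {s t u : Set α}

theorem prod_subset_swap_of_preimage_swap_eq (hS : Prod.swap ⁻¹' S = S) (h : s ×ˢ t ⊆ S) :
    t ×ˢ s ⊆ S := by
  rw [← hS, ← Set.preimage_swap_prod]
  exact Set.preimage_mono h

theorem prod_subset_of_comp_self_subset {comp : Set (α × α) → Set (α × α) → Set (α × α)}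
    (hmono : ∀ A B A' B', A ⊆ A' → B ⊆ B' → comp A B ⊆ comp A' B')
    (hrect : comp (s ×ˢ t) (t ×ˢ u) = s ×ˢ u) (hS : comp S S ⊆ S)
    (hst : s ×ˢ t ⊆ S) (htu : t ×ˢ u ⊆ S) : s ×ˢ u ⊆ S :=
  hrect ▸ (hmono _ _ _ _ hst htu).trans hS

end Rectangles

theorem simp_is_partial_equivalence_general
    {ℓ I : Type} [DecidableEq ℓ]
    (G : I → Type)
    (otimes : Set ((Σ x, G x) × (Σ x, G x)) → Set ((Σ x, G x) × (Σ x, G x)) →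
      Set ((Σ x, G x) × (Σ x, G x)))
    (hmono : ∀ A B A' B', A ⊆ A' → B ⊆ B' → otimes A B ⊆ otimes A' B')
    (θ : Set (Option ℓ) → Set ((Σ x, G x) × (Σ x, G x)))
    (hθconv : ∀ A, Prod.swap ⁻¹' θ A = θ A)
    (hθcomp : ∀ A B, θ (lynComp A B) = otimes (θ A) (θ B))
    (hrect : ∀ x y z, otimes (Gset G x ×ˢ Gset G y) (Gset G y ×ˢ Gset G z) =
      Gset G x ×ˢ Gset G z)
    (p : ℓ) :
    (∀ x y : I, Gset G x ×ˢ Gset G y ⊆ θ {some p, none} →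
      Gset G y ×ˢ Gset G x ⊆ θ {some p, none}) ∧
    (∀ x y z : I, Gset G x ×ˢ Gset G y ⊆ θ {some p, none} →
      Gset G y ×ˢ Gset G z ⊆ θ {some p, none} →
      Gset G x ×ˢ Gset G z ⊆ θ {some p, none}) ∧
    (∀ x y : I, Gset G x ×ˢ Gset G y ⊆ θ {some p, none} →
      Gset G x ×ˢ Gset G x ⊆ θ {some p, none} ∧
      Gset G y ×ˢ Gset G y ⊆ θ {some p, none}) := by
  have hidem : otimes (θ {some p, none}) (θ {some p, none}) ⊆ θ {some p, none} := by
    rw [← hθcomp, lynComp_pair_self]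
  have hsymm : ∀ x y : I, Gset G x ×ˢ Gset G y ⊆ θ {some p, none} →
      Gset G y ×ˢ Gset G x ⊆ θ {some p, none} := fun _ _ =>
    prod_subset_swap_of_preimage_swap_eq (hθconv _)
  have htrans : ∀ x y z : I, Gset G x ×ˢ Gset G y ⊆ θ {some p, none} →
      Gset G y ×ˢ Gset G z ⊆ θ {some p, none} →
      Gset G x ×ˢ Gset G z ⊆ θ {some p, none} := fun x y z =>
    prod_subset_of_comp_self_subset hmono (hrect x y z) hidem
  exact ⟨hsymm, htrans, fun x y h =>
    ⟨htrans x y x h (hsymm x y h), htrans y x y (hsymm x y h) h⟩⟩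

/-- For a point `p` of the line, `x ∼_p y` iff `G_x × G_y ⊆ θ({p, 1'})`; this relation on
the indices is symmetric, transitive, and reflexive on its domain (a partial
equivalence relation). -/
theorem simp_is_partial_equivalence
    {ℓ I : Type} [Fintype ℓ] [DecidableEq ℓ] (hl : 2 ≤ Fintype.card ℓ)
    (G : I → Type) [∀ x, Group (G x)]
    (H : ∀ x y, Subgroup (G x)) [∀ x y, (H x y).Normal]
    (φ : ∀ x y, (G x ⧸ H x y) ≃* (G y ⧸ H y x))
    (hφ : ∀ x y, φ y x = (φ x y).symm)
    (hHxx : ∀ x, H x x = ⊥)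
    (otimes : Set ((Σ x, G x) × (Σ x, G x)) → Set ((Σ x, G x) × (Σ x, G x)) →
      Set ((Σ x, G x) × (Σ x, G x)))
    (hmono : ∀ A B A' B', A ⊆ A' → B ⊆ B' → otimes A B ⊆ otimes A' B')
    (θ : Set (Option ℓ) → Set ((Σ x, G x) × (Σ x, G x)))
    (hθinj : Function.Injective θ)
    (hθun : ∀ A B, θ (A ∪ B) = θ A ∪ θ B)
    (hθc : ∀ A, θ Aᶜ = (θ A)ᶜ)
    (hθid : θ {none} = {p | p.1 = p.2})
    (hθconv : ∀ A, Prod.swap ⁻¹' θ A = θ A)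
    (hθcomp : ∀ A B, θ (lynComp A B) = otimes (θ A) (θ B))
    (hrect : ∀ x y z, otimes (Gset G x ×ˢ Gset G y) (Gset G y ×ˢ Gset G z) =
      Gset G x ×ˢ Gset G z)
    (p : ℓ) :
    (∀ x y : I, Gset G x ×ˢ Gset G y ⊆ θ {some p, none} →
      Gset G y ×ˢ Gset G x ⊆ θ {some p, none}) ∧
    (∀ x y z : I, Gset G x ×ˢ Gset G y ⊆ θ {some p, none} →
      Gset G y ×ˢ Gset G z ⊆ θ {some p, none} →
      Gset G x ×ˢ Gset G z ⊆ θ {some p, none}) ∧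
    (∀ x y : I, Gset G x ×ˢ Gset G y ⊆ θ {some p, none} →
      Gset G x ×ˢ Gset G x ⊆ θ {some p, none} ∧
      Gset G y ×ˢ Gset G y ⊆ θ {some p, none}) :=
  simp_is_partial_equivalence_general G otimes hmono θ hθconv hθcomp hrect p
end

section
/- If the Lyndon algebra of a finite line with at least two points is embeddable into a full coset relation algebra on a simple group triple, then all the normal subgroups H_{xy} are trivial: H_{xy} = {e_x} for all x, y ∈ I. -/
open scoped Pointwise

theorem Subgroup.le_of_image_mk_sup_eq {G G' : Type*} [Group G] [Group G']
    {N K : Subgroup G} [N.Normal] {M L : Subgroup G'} [M.Normal] (φ : G ⧸ N ≃* G' ⧸ M)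
    (h : φ '' ((QuotientGroup.mk : G → G ⧸ N) '' ↑(N ⊔ K)) =
      (QuotientGroup.mk : G' → G' ⧸ M) '' ↑(M ⊔ L))
    (hLM : L ≤ M) : K ≤ N := by
  intro k hk
  have hφk : φ k ∈ (QuotientGroup.mk : G' → G' ⧸ M) '' ↑(M ⊔ L) :=
    h ▸ ⟨_, ⟨k, Subgroup.mem_sup_right hk, rfl⟩, rfl⟩
  obtain ⟨g, hg, hgk⟩ := hφk
  rw [sup_eq_left.mpr hLM, SetLike.mem_coe, ← QuotientGroup.eq_one_iff, hgk] at hg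
  rwa [← QuotientGroup.eq_one_iff, ← map_eq_one_iff φ φ.injective]

theorem fa7_all_subgroups_trivial_general
    {ℓ I : Type}
    (G : I → Type) [∀ x, Group (G x)]
    (H : ∀ x y, Subgroup (G x)) [∀ x y, (H x y).Normal]
    (φ : ∀ x y, (G x ⧸ H x y) ≃* (G y ⧸ H y x))
    -- the Image Theorem: `φ_{xv}[H_{xv} ∘ H_{xy}] = K_{xv} ∘ H_{vy}` (with `K_{xv} = H_{vx}`)
    (himage : ∀ x v y : I,
      ⇑(φ x v) '' ((QuotientGroup.mk : G x → G x ⧸ H x v) '' ↑(H x v ⊔ H x y)) =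
        (QuotientGroup.mk : G v → G v ⧸ H v x) '' ↑(H v x ⊔ H v y))
    (θ : Set (Option ℓ) → Set ((Σ x, G x) × (Σ x, G x)))
    -- Lemma fa2: a unique point above each pair with nontrivial subgroup
    (hfa2 : ∀ u v : I, H u v ≠ ⊥ →
      ∃! q : ℓ, (Gset G u ∪ Gset G v) ×ˢ (Gset G u ∪ Gset G v) ⊆ θ {some q, none})
    -- Lemma fa5: no `∼_p` class is all of `I`
    (hfa5 : ∀ (p : ℓ) (x : I), ∃ v : I, ¬ Gset G x ×ˢ Gset G v ⊆ θ {some p, none})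
    -- Lemma fa6: triviality of the `H`-subgroups toward non-equivalent indices
    (hfa6 : ∀ (p : ℓ) (x y : I), Gset G x ×ˢ Gset G y ⊆ θ {some p, none} →
      H x y ≠ ⊥ → ∀ v : I, ¬ Gset G x ×ˢ Gset G v ⊆ θ {some p, none} →
        H x v = ⊥ ∧ H y v = ⊥ ∧ H v x = ⊥ ∧ H v y = ⊥) :
    ∀ x y : I, H x y = ⊥ := by
  intro x y
  by_contra hxy
  obtain ⟨p, hp, -⟩ := hfa2 x y hxy
  have hxy_sub : Gset G x ×ˢ Gset G y ⊆ θ {some p, none} :=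
    (Set.prod_mono Set.subset_union_left Set.subset_union_right).trans hp
  obtain ⟨v, hxv_not_sub⟩ := hfa5 p x
  obtain ⟨hxv, -, -, hvy⟩ := hfa6 p x y hxy_sub hxy v hxv_not_sub
  -- as `H v y = ⊥`, the Image Theorem for `x, v, y` puts `H x y` inside `H x v = ⊥`
  have hle := Subgroup.le_of_image_mk_sup_eq (φ x v) (himage x v y) (hvy ▸ bot_le)
  exact hxy (le_bot_iff.mp (hxv ▸ hle))

/-- Theorem fa7: if the Lyndon algebra of a finite line with at least two points embeds
into a full coset relation algebra on a simple group triple, then all the normal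
subgroups `H_{xy}` are trivial. -/
theorem fa7_all_subgroups_trivial
    {ℓ I : Type} [Fintype ℓ] [DecidableEq ℓ] (hl : 2 ≤ Fintype.card ℓ)
    (G : I → Type) [∀ x, Group (G x)]
    (H : ∀ x y, Subgroup (G x)) [∀ x y, (H x y).Normal]
    (φ : ∀ x y, (G x ⧸ H x y) ≃* (G y ⧸ H y x))
    (hφ : ∀ x y, φ y x = (φ x y).symm)
    (hHxx : ∀ x, H x x = ⊥)
    -- the Image Theorem: `φ_{xv}[H_{xv} ∘ H_{xy}] = K_{xv} ∘ H_{vy}` (with `K_{xv} = H_{vx}`)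
    (himage : ∀ x v y : I,
      ⇑(φ x v) '' ((QuotientGroup.mk : G x → G x ⧸ H x v) '' ↑(H x v ⊔ H x y)) =
        (QuotientGroup.mk : G v → G v ⧸ H v x) '' ↑(H v x ⊔ H v y))
    (otimes : Set ((Σ x, G x) × (Σ x, G x)) → Set ((Σ x, G x) × (Σ x, G x)) →
      Set ((Σ x, G x) × (Σ x, G x)))
    (hmono : ∀ A B A' B', A ⊆ A' → B ⊆ B' → otimes A B ⊆ otimes A' B')
    (θ : Set (Option ℓ) → Set ((Σ x, G x) × (Σ x, G x)))
    (hθinj : Function.Injective θ)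
    (hθun : ∀ A B, θ (A ∪ B) = θ A ∪ θ B)
    (hθc : ∀ A, θ Aᶜ = (θ A)ᶜ)
    (hθid : θ {none} = {p | p.1 = p.2})
    (hθconv : ∀ A, Prod.swap ⁻¹' θ A = θ A)
    (hθcomp : ∀ A B, θ (lynComp A B) = otimes (θ A) (θ B))
    (hrect : ∀ x y z, otimes (Gset G x ×ˢ Gset G y) (Gset G y ×ˢ Gset G z) =
      Gset G x ×ˢ Gset G z)
    -- Lemma fa2: a unique point above each pair with nontrivial subgroup
    (hfa2 : ∀ u v : I, H u v ≠ ⊥ →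
      ∃! q : ℓ, (Gset G u ∪ Gset G v) ×ˢ (Gset G u ∪ Gset G v) ⊆ θ {some q, none})
    -- Lemma fa5: no `∼_p` class is all of `I`
    (hfa5 : ∀ (p : ℓ) (x : I), ∃ v : I, ¬ Gset G x ×ˢ Gset G v ⊆ θ {some p, none})
    -- Lemma fa6: triviality of the `H`-subgroups toward non-equivalent indices
    (hfa6 : ∀ (p : ℓ) (x y : I), Gset G x ×ˢ Gset G y ⊆ θ {some p, none} →
      H x y ≠ ⊥ → ∀ v : I, ¬ Gset G x ×ˢ Gset G v ⊆ θ {some p, none} →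
        H x v = ⊥ ∧ H y v = ⊥ ∧ H v x = ⊥ ∧ H v y = ⊥) :
    ∀ x y : I, H x y = ⊥ :=
  fa7_all_subgroups_trivial_general G H φ himage θ hfa2 hfa5 hfa6
end

section
/- In a full coset relation algebra in which all subgroups H_{xy} are trivial ({e_x}), each atom R_{xy,α} is a functional relation: it is the graph of the bijection g ↦ ḡ · f̄ from G_x to G_y, where φ_{xy}({g}) = {ḡ} and α corresponds to the element f with φ-image f̄; in particular (u,v) ∈ R_{xy,α} and (u,w) ∈ R_{xy,α} imply v = w. -/
open scoped Pointwise

/-!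
The product of two cosets of a normal subgroup is again a coset, so each atom `R_{xy,α}` is the
graph of `u ↦ φ ū · φ α` read in the quotient `Gy ⧸ K`. For `K = ⊥` the quotient map is
injective, and the relation is the graph of a function `Gx → Gy`.
-/

theorem cosetSet_mul_cosetSet {G : Type*} [Group G] (K : Subgroup G) [K.Normal]
    (a b : G ⧸ K) : cosetSet K a * cosetSet K b = cosetSet K (a * b) := by
  refine le_antisymm ?_ fun g hg => ?_
  · rintro _ ⟨x, hx, y, hy, rfl⟩
    exact (QuotientGroup.mk_mul K x y).trans (congrArg₂ (· * ·) hx hy)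
  · obtain ⟨x, rfl⟩ := QuotientGroup.mk_surjective a
    have hx : (QuotientGroup.mk (x⁻¹ * g) : G ⧸ K) = b := by
      rw [QuotientGroup.mk_mul, QuotientGroup.mk_inv, show (g : G ⧸ K) = x * b from hg,
        inv_mul_cancel_left]
    simpa using Set.mul_mem_mul (show x ∈ cosetSet K x from rfl)
      (show x⁻¹ * g ∈ cosetSet K b from hx)

theorem mem_cosetRel_iff {Gx Gy : Type*} [Group Gx] [Group Gy] {H : Subgroup Gx} [H.Normal]
    {K : Subgroup Gy} [K.Normal] {φ : (Gx ⧸ H) ≃* (Gy ⧸ K)} {α : Gx ⧸ H} {u : Gx} {v : Gy} :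
    (u, v) ∈ cosetRel H K φ α ↔ (v : Gy ⧸ K) = φ u * φ α := by
  simp only [cosetRel, cosetSet_mul_cosetSet, Set.mem_iUnion, Set.mem_prod]
  exact ⟨fun ⟨_, hu, hv⟩ => hu ▸ hv, fun h => ⟨u, rfl, h⟩⟩

/-- In a full coset relation algebra in which the subgroups `H_{xy}` are trivial, every
atom `R_{xy,α}` is a functional relation: it is the graph of the bijection
`g ↦ ḡ·f̄` (where `φ` sends the singleton coset of `g` to that of `ḡ`, and `α` is the
singleton coset of `f`); in particular `(u,v) ∈ R_{xy,α}` and `(u,w) ∈ R_{xy,α}` imply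
`v = w`. -/
theorem atom_functional_of_trivial_subgroups
    {Gx Gy : Type*} [Group Gx] [Group Gy]
    (φ : (Gx ⧸ (⊥ : Subgroup Gx)) ≃* (Gy ⧸ (⊥ : Subgroup Gy)))
    (α : Gx ⧸ (⊥ : Subgroup Gx)) :
    (∀ u v w, (u, v) ∈ cosetRel ⊥ ⊥ φ α → (u, w) ∈ cosetRel ⊥ ⊥ φ α → v = w) ∧
    (∀ u v, (u, v) ∈ cosetRel ⊥ ⊥ φ α ↔
      (QuotientGroup.mk v : Gy ⧸ (⊥ : Subgroup Gy)) =
        φ (QuotientGroup.mk u) * φ α) := by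
  refine ⟨fun u v w hv hw => ?_, fun _ _ => mem_cosetRel_iff⟩
  -- the inverse of `quotientEquivSelf` is `QuotientGroup.mk`
  exact (QuotientGroup.quotientEquivSelf Gy).symm.injective
    ((mem_cosetRel_iff.mp hv).trans (mem_cosetRel_iff.mp hw).symm)
end
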